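/- The acyclic chromatic index of the d-dimensional hypercube Q_d = K_2^d equals d+1 for all d ≥ 2, and equals 1 for d = 1. -/

import Mathlib

/-!
Lower bound: in a `k`-regular graph properly coloured with `k` colours every vertex sees every
colour, so for two colours `a ≠ b` one can walk forever, alternately along an `a`-edge and a
`b`-edge. This walk never backtracks, and a non-backtracking walk in a forest never revisits a
vertex, which is impossible in a finite graph.

Upper bound: `Q_(d+1)` is the prism `K₂ □ Q_d`. Colour the rungs with a new colour, the first copy
of `Q_d` with an acyclic colouring `c` and the second with `σ ∘ c`, where `σ` is a cyclic shift of
the colours. A bichromatic cycle through the new colour alternates between rungs and edges of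
colour `α`; collapsing the rungs leaves a closed non-backtracking walk in `Q_d` whose colours
alternate between `α` and `σ⁻¹ α`, contradicting the acyclicity of `c`.
-/

open SimpleGraph

/-- An edge colouring of `G` is proper if distinct edges sharing a vertex
receive distinct colours. -/
def IsProperEdgeColoring {V : Type*} {γ : Type*} (G : SimpleGraph V) (c : Sym2 V → γ) : Prop :=
  ∀ e₁ ∈ G.edgeSet, ∀ e₂ ∈ G.edgeSet, e₁ ≠ e₂ → (∃ v, v ∈ e₁ ∧ v ∈ e₂) → c e₁ ≠ c e₂

/-- The subgraph of `G` formed by the union of the colour classes `a` and `b`. -/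
def twoColourSubgraph {V : Type*} {γ : Type*} (G : SimpleGraph V) (c : Sym2 V → γ)
    (a b : γ) : SimpleGraph V where
  Adj x y := G.Adj x y ∧ (c s(x, y) = a ∨ c s(x, y) = b)
  symm := ⟨fun x y h => ⟨h.1.symm, by rw [Sym2.eq_swap]; exact h.2⟩⟩
  loopless := ⟨fun x h => G.loopless.irrefl x h.1⟩

/-- A proper edge colouring is acyclic if the union of any two colour classes
is a forest. -/
def IsAcyclicEdgeColoring {V : Type*} {γ : Type*} (G : SimpleGraph V) (c : Sym2 V → γ) : Prop :=
  IsProperEdgeColoring G c ∧ ∀ a b : γ, (twoColourSubgraph G c a b).IsAcyclic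

/-- The acyclic chromatic index `a'(G)`: the least number of colours in an
acyclic proper edge colouring of `G`. -/
noncomputable def acyclicChromaticIndex {V : Type*} (G : SimpleGraph V) : ℕ :=
  sInf { n | ∃ c : Sym2 V → Fin n, IsAcyclicEdgeColoring G c }

/-- The cartesian (box) product of a family of graphs: two tuples are adjacent
iff they differ in exactly one coordinate, and are adjacent there. -/
def piBoxProd {ι : Type*} {V : ι → Type*} (G : ∀ i, SimpleGraph (V i)) :
    SimpleGraph (∀ i, V i) where
  Adj x y := ∃ i, (G i).Adj (x i) (y i) ∧ ∀ j, j ≠ i → x j = y j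
  symm := ⟨fun x y => by
    rintro ⟨i, h, hj⟩
    exact ⟨i, h.symm, fun j hji => (hj j hji).symm⟩⟩
  loopless := ⟨fun x => by
    rintro ⟨i, h, -⟩
    exact (G i).loopless.irrefl _ h⟩

namespace SimpleGraph

variable {V : Type*} {G : SimpleGraph V}

structure IsNonbacktracking (G : SimpleGraph V) (f : ℕ → V) : Prop where
  adj : ∀ k, G.Adj (f k) (f (k + 1))
  ne : ∀ k, f (k + 2) ≠ f k

lemma IsAcyclic.exists_isPath_of_isNonbacktracking (hG : G.IsAcyclic) {f : ℕ → V}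
    (hf : G.IsNonbacktracking f) (n : ℕ) :
    ∃ p : G.Walk (f 0) (f (n + 1)),
      p.IsPath ∧ p.penultimate = f n ∧ p.support = (List.range (n + 2)).map f := by
  induction n with
  | zero => exact ⟨(hf.adj 0).toWalk, by simp [(hf.adj 0).ne], rfl, by simp [List.range_succ]⟩
  | succ n ih =>
    obtain ⟨p, hp, hpen, hsupp⟩ := ih
    have hnew : f (n + 2) ∉ p.support := fun hmem =>
      hf.ne n (hpen ▸ hG.eq_penultimate_of_adj_end hp (hf.adj (n + 1)) hmem)
    refine ⟨p.concat (hf.adj (n + 1)), hp.concat hnew _, p.penultimate_concat _, ?_⟩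
    rw [Walk.support_concat, hsupp, List.range_succ (n := n + 2), List.map_append]
    rfl

lemma IsAcyclic.injective_of_isNonbacktracking (hG : G.IsAcyclic) {f : ℕ → V}
    (hf : G.IsNonbacktracking f) : Function.Injective f := by
  intro k l hkl
  obtain ⟨p, hp, -, hsupp⟩ := hG.exists_isPath_of_isNonbacktracking hf (k + l)
  have hnodup : ((List.range (k + l + 2)).map f).Nodup := hsupp ▸ hp.support_nodup
  exact List.inj_on_of_nodup_map hnodup (by simp; omega) (by simp; omega) hkl

lemma Walk.IsCycle.isNonbacktracking_getVert_mod {u : V} {p : G.Walk u u} (hp : p.IsCycle) :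
    G.IsNonbacktracking fun k => p.getVert (k % p.length) := by
  have hlen := hp.three_le_length
  have hpos : 0 < p.length := by omega
  have hwrap : ∀ i ≤ p.length, p.getVert (i % p.length) = p.getVert i := by
    intro i hi
    rcases hi.lt_or_eq with hi | rfl
    · rw [Nat.mod_eq_of_lt hi]
    · rw [Nat.mod_self, Walk.getVert_zero, Walk.getVert_length]
  refine ⟨fun k => ?_, fun k h => ?_⟩
  · have hk := Nat.mod_lt k hpos
    rw [← Nat.mod_add_mod k p.length 1, hwrap _ hk]
    exact p.adj_getVert_succ hk
  · have hk := Nat.mod_lt k hpos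
    have hk₂ := Nat.mod_lt (k + 2) hpos
    have hmod : (k + 2) % p.length = k % p.length :=
      hp.getVert_injOn' (by simp only [Set.mem_ofPred_eq]; omega)
        (by simp only [Set.mem_ofPred_eq]; omega) h
    have h₂ : 2 ≡ 0 [MOD p.length] := Nat.ModEq.add_left_cancel' k hmod
    rw [Nat.ModEq, Nat.mod_eq_of_lt (by omega : 2 < p.length)] at h₂
    simp at h₂

theorem isAcyclic_iff_forall_periodic_not_isNonbacktracking :
    G.IsAcyclic ↔
      ∀ (f : ℕ → V) (n : ℕ), 0 < n → Function.Periodic f n → ¬ G.IsNonbacktracking f := by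
  refine ⟨fun hG f n hn hper hf => ?_, fun h u p hp => ?_⟩
  · exact hn.ne' (hG.injective_of_isNonbacktracking hf (by simpa using hper 0))
  · refine h _ p.length (by have := hp.three_le_length; omega) (fun k => ?_)
      hp.isNonbacktracking_getVert_mod
    simp

lemma isAcyclic_of_forall_adj_eq (h : ∀ v w₁ w₂, G.Adj v w₁ → G.Adj v w₂ → w₁ = w₂) :
    G.IsAcyclic :=
  isAcyclic_iff_forall_periodic_not_isNonbacktracking.mpr fun _ _ _ _ hf =>
    hf.ne 0 (h _ _ _ (hf.adj 1) (hf.adj 0).symm)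

end SimpleGraph

section EdgeColoring

variable {V W γ γ' : Type*} {G : SimpleGraph V} {c : Sym2 V → γ}

lemma twoColourSubgraph_comm (G : SimpleGraph V) (c : Sym2 V → γ) (a b : γ) :
    twoColourSubgraph G c a b = twoColourSubgraph G c b a := by
  ext x y
  exact and_congr_right' or_comm

lemma isProperEdgeColoring_iff :
    IsProperEdgeColoring G c ↔
      ∀ ⦃v w₁ w₂⦄, G.Adj v w₁ → G.Adj v w₂ → w₁ ≠ w₂ → c s(v, w₁) ≠ c s(v, w₂) := by
  refine ⟨fun hc v w₁ w₂ h₁ h₂ hne => ?_, fun hc e₁ he₁ e₂ he₂ hne ⟨v, hv₁, hv₂⟩ => ?_⟩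
  · exact hc _ h₁ _ h₂ (fun h => hne (Sym2.congr_right.mp h))
      ⟨v, Sym2.mem_mk_left _ _, Sym2.mem_mk_left _ _⟩
  · obtain ⟨w₁, rfl⟩ := Sym2.mem_iff_exists.mp hv₁
    obtain ⟨w₂, rfl⟩ := Sym2.mem_iff_exists.mp hv₂
    exact hc he₁ he₂ (fun h => hne (h ▸ rfl))

lemma IsProperEdgeColoring.injOn_neighborSet (hc : IsProperEdgeColoring G c) (v : V) :
    Set.InjOn (fun w => c s(v, w)) (G.neighborSet v) := fun _ h₁ _ h₂ =>
  not_imp_not.mp (isProperEdgeColoring_iff.mp hc h₁ h₂)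

lemma IsProperEdgeColoring.degree_le_card [Fintype γ] (hc : IsProperEdgeColoring G c) (v : V)
    [Fintype (G.neighborSet v)] : G.degree v ≤ Fintype.card γ := by
  rw [← card_neighborSet_eq_degree]
  exact Fintype.card_le_of_injective _ fun w₁ w₂ h =>
    Subtype.ext (hc.injOn_neighborSet v w₁.2 w₂.2 h)

lemma IsProperEdgeColoring.exists_adj_of_degree_eq_card [Fintype γ]
    (hc : IsProperEdgeColoring G c) {v : V} [Fintype (G.neighborSet v)]
    (hv : G.degree v = Fintype.card γ) (a : γ) : ∃ w, G.Adj v w ∧ c s(v, w) = a := by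
  rw [← card_neighborSet_eq_degree] at hv
  have hbij := (Fintype.bijective_iff_injective_and_card
    (fun w : G.neighborSet v => c s(v, w))).mpr
      ⟨fun w₁ w₂ h => Subtype.ext (hc.injOn_neighborSet v w₁.2 w₂.2 h), hv⟩
  obtain ⟨⟨w, hw⟩, rfl⟩ := hbij.2 a
  exact ⟨w, hw, rfl⟩

lemma isAcyclicEdgeColoring_of_card_le_two [Fintype V] (hV : Fintype.card V ≤ 2)
    (c : Sym2 V → γ) : IsAcyclicEdgeColoring G c := by
  refine ⟨isProperEdgeColoring_iff.mpr fun v w₁ w₂ h₁ h₂ hne _ => ?_, fun a b => ?_⟩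
  · exact absurd (Fintype.two_lt_card_iff.mpr ⟨v, w₁, w₂, h₁.ne, h₂.ne, hne⟩) (by omega)
  · exact IsAcyclic.of_card_le_two (by simpa [ENat.card_eq_coe_fintype_card] using hV)

lemma IsAcyclicEdgeColoring.equiv_comp (hc : IsAcyclicEdgeColoring G c) (e : γ ≃ γ') :
    IsAcyclicEdgeColoring G (e ∘ c) := by
  refine ⟨fun e₁ h₁ e₂ h₂ hne hv h => hc.1 e₁ h₁ e₂ h₂ hne hv (e.injective h), fun a b => ?_⟩
  refine IsAcyclic.anti (G' := twoColourSubgraph G c (e.symm a) (e.symm b))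
    (fun x y hxy => ⟨hxy.1, ?_⟩) (hc.2 _ _)
  simpa only [Function.comp_apply, Equiv.eq_symm_apply] using hxy.2

lemma IsAcyclicEdgeColoring.comap {H : SimpleGraph W} {c : Sym2 W → γ}
    (hc : IsAcyclicEdgeColoring H c) (f : G →g H) (hf : Function.Injective f) :
    IsAcyclicEdgeColoring G (c ∘ Sym2.map f) := by
  refine ⟨isProperEdgeColoring_iff.mpr fun v w₁ w₂ h₁ h₂ hne => ?_, fun a b => ?_⟩
  · simpa only [Function.comp_apply, Sym2.map_mk] using
      isProperEdgeColoring_iff.mp hc.1 (f.map_adj h₁) (f.map_adj h₂) (hf.ne hne)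
  · exact IsAcyclic.comap (G' := twoColourSubgraph H c a b)
      ⟨f, fun hxy => ⟨f.map_adj hxy.1, hxy.2⟩⟩ hf (hc.2 a b)

lemma acyclicChromaticIndex_eq {n : ℕ} (h : ∃ c : Sym2 V → Fin n, IsAcyclicEdgeColoring G c)
    (hmin : ∀ (m : ℕ) (c : Sym2 V → Fin m), IsAcyclicEdgeColoring G c → n ≤ m) :
    acyclicChromaticIndex G = n :=
  IsLeast.csInf_eq ⟨h, fun m ⟨c, hc⟩ => hmin m c hc⟩

lemma isNonbacktracking_twoColourSubgraph {f : ℕ → V} {a b : γ}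
    (hadj : ∀ k, G.Adj (f k) (f (k + 1)))
    (hcol : ∀ k, c s(f k, f (k + 1)) = a ∨ c s(f k, f (k + 1)) = b)
    (hne : ∀ k, c s(f k, f (k + 1)) ≠ c s(f (k + 1), f (k + 2))) :
    (twoColourSubgraph G c a b).IsNonbacktracking f where
  adj k := ⟨hadj k, hcol k⟩
  ne k h := hne k (by rw [h, Sym2.eq_swap])

lemma exists_isNonbacktracking_twoColourSubgraph [Nonempty V] {a b : γ} (hab : a ≠ b)
    (ha : ∀ v, ∃ w, G.Adj v w ∧ c s(v, w) = a) (hb : ∀ v, ∃ w, G.Adj v w ∧ c s(v, w) = b) :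
    ∃ f : ℕ → V, (twoColourSubgraph G c a b).IsNonbacktracking f := by
  choose na hna_adj hna_col using ha
  choose nb hnb_adj hnb_col using hb
  let f : ℕ → V := fun k => Nat.rec (Classical.arbitrary V)
    (fun k v => if Even k then na v else nb v) k
  have hcol : ∀ k, c s(f k, f (k + 1)) = if Even k then a else b := by
    intro k
    show c s(f k, if Even k then na (f k) else nb (f k)) = _
    split_ifs
    exacts [hna_col _, hnb_col _]
  refine ⟨f, isNonbacktracking_twoColourSubgraph (fun k => ?_) (fun k => ?_) (fun k => ?_)⟩
  · show G.Adj (f k) (if Even k then na (f k) else nb (f k))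
    split_ifs
    exacts [hna_adj _, hnb_adj _]
  · rw [hcol]; split_ifs <;> simp
  · simp only [hcol, Nat.even_add_one]; split_ifs <;> simp [hab, hab.symm]

theorem SimpleGraph.IsRegularOfDegree.lt_card_of_isAcyclicEdgeColoring [Finite V] [Nonempty V]
    [G.LocallyFinite] [Fintype γ] {k : ℕ} (hG : G.IsRegularOfDegree k) (hk : 2 ≤ k)
    (hc : IsAcyclicEdgeColoring G c) : k < Fintype.card γ := by
  obtain ⟨v⟩ := ‹Nonempty V›
  refine lt_of_le_of_ne (hG.degree_eq v ▸ hc.1.degree_le_card v) fun hcard => ?_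
  have hsees : ∀ v a, ∃ w, G.Adj v w ∧ c s(v, w) = a := fun v =>
    hc.1.exists_adj_of_degree_eq_card ((hG.degree_eq v).trans hcard)
  obtain ⟨a, b, hab⟩ := Fintype.one_lt_card_iff.mp (by omega : 1 < Fintype.card γ)
  obtain ⟨f, hf⟩ := exists_isNonbacktracking_twoColourSubgraph hab (hsees · a) (hsees · b)
  exact not_injective_infinite_finite f ((hc.2 a b).injective_of_isNonbacktracking hf)

end EdgeColoring

section Prism

variable {V γ : Type*} {G : SimpleGraph V}

abbrev prism (G : SimpleGraph V) : SimpleGraph (Fin 2 × V) := (⊤ : SimpleGraph (Fin 2)) □ G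

lemma prism_adj {x y : Fin 2 × V} :
    (prism G).Adj x y ↔ x.1 ≠ y.1 ∧ x.2 = y.2 ∨ G.Adj x.2 y.2 ∧ x.1 = y.1 := by
  simp [boxProd_adj]

lemma Fin.two_eq_of_ne_of_ne : ∀ {s t u : Fin 2}, s ≠ u → t ≠ u → s = t := by decide

def prismColoring (c : Sym2 V → γ) (σ : Equiv.Perm γ) : Sym2 (Fin 2 × V) → Option γ :=
  Sym2.lift ⟨fun x y => if x.1 = y.1 then some ((σ ^ (x.1 : ℕ)) (c s(x.2, y.2))) else none, by
    rintro ⟨s, v⟩ ⟨t, w⟩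
    by_cases h : s = t
    · subst h; simp [Sym2.eq_swap]
    · simp [h, Ne.symm h]⟩

variable {c : Sym2 V → γ} {σ : Equiv.Perm γ} {x y : Fin 2 × V}

lemma prismColoring_of_fst_eq (h : x.1 = y.1) :
    prismColoring c σ s(x, y) = some ((σ ^ (x.1 : ℕ)) (c s(x.2, y.2))) :=
  if_pos h

lemma prismColoring_of_fst_ne (h : x.1 ≠ y.1) : prismColoring c σ s(x, y) = none :=
  if_neg h

lemma IsProperEdgeColoring.prismColoring (hc : IsProperEdgeColoring G c) (σ : Equiv.Perm γ) :
    IsProperEdgeColoring (prism G) (prismColoring c σ) := by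
  refine isProperEdgeColoring_iff.mpr ?_
  rintro ⟨t, v⟩ ⟨t₁, w₁⟩ ⟨t₂, w₂⟩ h₁ h₂ hne
  rcases prism_adj.mp h₁ with ⟨ht₁, rfl : v = w₁⟩ | ⟨hv₁, rfl : t = t₁⟩ <;>
    rcases prism_adj.mp h₂ with ⟨ht₂, rfl : v = w₂⟩ | ⟨hv₂, rfl : t = t₂⟩
  · exact absurd (Prod.ext (Fin.two_eq_of_ne_of_ne (Ne.symm ht₁) (Ne.symm ht₂)) rfl) hne
  · simp [prismColoring_of_fst_ne ht₁, prismColoring_of_fst_eq]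
  · simp [prismColoring_of_fst_ne ht₂, prismColoring_of_fst_eq]
  · simp only [prismColoring_of_fst_eq, ne_eq, Option.some.injEq, EmbeddingLike.apply_eq_iff_eq]
    exact isProperEdgeColoring_iff.mp hc hv₁ hv₂ fun h => hne (h ▸ rfl)

lemma isAcyclic_twoColourSubgraph_prismColoring_none_none :
    (twoColourSubgraph (prism G) (prismColoring c σ) none none).IsAcyclic := by
  have rung : ∀ {x y}, (twoColourSubgraph (prism G) (prismColoring c σ) none none).Adj x y →
      x.1 ≠ y.1 ∧ x.2 = y.2 := by
    rintro x y ⟨hxy, hcol⟩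
    have hne : x.1 ≠ y.1 := fun h => by simp [prismColoring_of_fst_eq h] at hcol
    exact ⟨hne, ((prism_adj.mp hxy).resolve_right fun h => hne h.2).2⟩
  refine isAcyclic_of_forall_adj_eq fun x y₁ y₂ h₁ h₂ => ?_
  obtain ⟨ht₁, hv₁⟩ := rung h₁
  obtain ⟨ht₂, hv₂⟩ := rung h₂
  exact Prod.ext (Fin.two_eq_of_ne_of_ne ht₁.symm ht₂.symm) (hv₁.symm.trans hv₂)

lemma isAcyclic_twoColourSubgraph_prismColoring_some_some
    (hc : ∀ a b, (twoColourSubgraph G c a b).IsAcyclic) (α β : γ) :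
    (twoColourSubgraph (prism G) (prismColoring c σ) (some α) (some β)).IsAcyclic := by
  refine isAcyclic_iff_forall_periodic_not_isNonbacktracking.mpr fun F n hn hper hF => ?_
  have hlayer : ∀ k, (F k).1 = (F (k + 1)).1 := fun k => by
    by_contra h
    simpa [prismColoring_of_fst_ne h] using (hF.adj k).2
  have hconst : ∀ k, (F k).1 = (F 0).1 := fun k => by
    induction k with
    | zero => rfl
    | succ k ih => rw [← hlayer, ih]
  set τ := σ ^ ((F 0).1 : ℕ)
  refine isAcyclic_iff_forall_periodic_not_isNonbacktracking.mp (hc (τ.symm α) (τ.symm β))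
    (fun k => (F k).2) n hn (fun k => congrArg Prod.snd (hper k))
    ⟨fun k => ⟨?_, ?_⟩, fun k h => hF.ne k (Prod.ext (by rw [hconst, hconst k]) h)⟩
  · exact ((prism_adj.mp (hF.adj k).1).resolve_left fun h => h.1 (hlayer k)).1
  · simpa [prismColoring_of_fst_eq (hlayer k), hconst k, Equiv.eq_symm_apply, τ] using
      (hF.adj k).2

lemma Equiv.Perm.pow_fin_two_apply_ne (hσ : ∀ a, σ a ≠ a) {t t' : Fin 2} (h : t ≠ t') (a : γ) :
    (σ ^ (t : ℕ)) a ≠ (σ ^ (t' : ℕ)) a := by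
  fin_cases t <;> fin_cases t' <;> simp_all [eq_comm]

lemma Equiv.Perm.eq_or_eq_symm_of_pow_fin_two_apply {t : Fin 2} {a b : γ}
    (h : (σ ^ (t : ℕ)) a = b) : a = b ∨ a = σ.symm b := by
  fin_cases t
  · exact Or.inl (by simpa using h)
  · exact Or.inr (by simp [← h])

lemma SimpleGraph.IsNonbacktracking.exists_rungs_alternate (hc : IsProperEdgeColoring G c)
    {α : γ} {F : ℕ → Fin 2 × V}
    (hF : (twoColourSubgraph (prism G) (prismColoring c σ) none (some α)).IsNonbacktracking F) :
    ∃ s, ∀ k, (F (2 * k + s)).1 ≠ (F (2 * k + s + 1)).1 ∧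
      (F (2 * k + s + 1)).1 = (F (2 * k + s + 2)).1 := by
  have hlayer : ∀ j, (F j).1 = (F (j + 1)).1 → prismColoring c σ s(F j, F (j + 1)) = some α :=
    fun j h => (hF.adj j).2.resolve_left (by simp [prismColoring_of_fst_eq h])
  have halt : ∀ j, (F j).1 ≠ (F (j + 1)).1 ↔ (F (j + 1)).1 = (F (j + 2)).1 := by
    refine fun j => ⟨fun h₁ => not_not.mp fun h₂ => hF.ne j ?_, fun h₂ h₁ => ?_⟩
    · have hv₁ := ((prism_adj.mp (hF.adj j).1).resolve_right fun h => h₁ h.2).2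
      have hv₂ := ((prism_adj.mp (hF.adj (j + 1)).1).resolve_right fun h => h₂ h.2).2
      exact Prod.ext (Fin.two_eq_of_ne_of_ne (Ne.symm h₂) h₁) (hv₂.symm.trans hv₁.symm)
    · refine isProperEdgeColoring_iff.mp (hc.prismColoring σ) (hF.adj j).1.symm
        (hF.adj (j + 1)).1 (hF.ne j).symm ?_
      rw [Sym2.eq_swap, hlayer j h₁, hlayer (j + 1) h₂]
  obtain ⟨s, hs⟩ : ∃ s, (F s).1 ≠ (F (s + 1)).1 := by
    by_cases h₀ : (F 0).1 = (F 1).1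
    · exact ⟨1, (halt 0).not.mp (not_not.mpr h₀)⟩
    · exact ⟨0, h₀⟩
  refine ⟨s, fun k => ?_⟩
  induction k with
  | zero => simpa using ⟨hs, (halt s).mp hs⟩
  | succ k ih =>
    have h := (halt (2 * k + s + 1)).not.mp (not_not.mpr ih.2)
    rw [show 2 * (k + 1) + s = 2 * k + s + 2 by ring]
    exact ⟨h, (halt _).mp h⟩

lemma isAcyclic_twoColourSubgraph_prismColoring_none_some (hc : IsAcyclicEdgeColoring G c)
    (hσ : ∀ a, σ a ≠ a) (α : γ) :
    (twoColourSubgraph (prism G) (prismColoring c σ) none (some α)).IsAcyclic := by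
  refine isAcyclic_iff_forall_periodic_not_isNonbacktracking.mpr fun F n hn hper hF => ?_
  obtain ⟨s, hs⟩ := hF.exists_rungs_alternate hc.1
  -- Collapsing the rungs: `g` is the closed walk left in `G`, `t k` the layer of its `k`-th edge.
  set g : ℕ → V := fun k => (F (2 * k + s + 1)).2
  set t : ℕ → Fin 2 := fun k => (F (2 * k + s + 1)).1
  have hidx : ∀ k, 2 * (k + 1) + s = 2 * k + s + 2 := fun k => by ring
  have hg : ∀ k, (F (2 * k + s + 2)).2 = g (k + 1) := fun k => by
    have hrung := (hs (k + 1)).1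
    rw [hidx] at hrung
    exact ((prism_adj.mp (hF.adj _).1).resolve_right fun h => hrung h.2).2.trans
      (by simp [g, hidx])
  have ht : ∀ k, t (k + 1) ≠ t k := fun k => by
    have hrung := (hs (k + 1)).1
    rw [hidx] at hrung
    simpa [t, hidx, (hs k).2] using hrung.symm
  have hedge : ∀ k, G.Adj (g k) (g (k + 1)) ∧ (σ ^ (t k : ℕ)) (c s(g k, g (k + 1))) = α := by
    intro k
    have hlay := (hs k).2
    have hadj := hF.adj (2 * k + s + 1)
    rw [← hg k]
    refine ⟨((prism_adj.mp hadj.1).resolve_left fun h => h.1 hlay).1, ?_⟩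
    simpa [prismColoring_of_fst_eq hlay] using hadj.2
  refine isAcyclic_iff_forall_periodic_not_isNonbacktracking.mp (hc.2 α (σ.symm α)) g n hn
    (fun k => ?_) (isNonbacktracking_twoColourSubgraph (fun k => (hedge k).1)
      (fun k => Equiv.Perm.eq_or_eq_symm_of_pow_fin_two_apply (hedge k).2) fun k h => ?_)
  · simp only [g, show 2 * (k + n) + s + 1 = 2 * k + s + 1 + 2 * n by ring]
    exact congrArg Prod.snd (by simpa using hper.nat_mul 2 (2 * k + s + 1))
  · refine Equiv.Perm.pow_fin_two_apply_ne hσ (ht k) (c s(g k, g (k + 1))) ?_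
    rw [(hedge k).2, h, (hedge (k + 1)).2]

theorem IsAcyclicEdgeColoring.prismColoring (hc : IsAcyclicEdgeColoring G c)
    (hσ : ∀ a, σ a ≠ a) :
    IsAcyclicEdgeColoring (prism G) (prismColoring c σ) := by
  refine ⟨hc.1.prismColoring σ, ?_⟩
  rintro (_ | α) (_ | β)
  · exact isAcyclic_twoColourSubgraph_prismColoring_none_none
  · exact isAcyclic_twoColourSubgraph_prismColoring_none_some hc hσ β
  · rw [twoColourSubgraph_comm]
    exact isAcyclic_twoColourSubgraph_prismColoring_none_some hc hσ α
  · exact isAcyclic_twoColourSubgraph_prismColoring_some_some hc.2 α β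

end Prism

def piBoxProdFinSuccIso {n : ℕ} {V : Fin (n + 1) → Type*} (G : ∀ i, SimpleGraph (V i)) :
    (G 0).boxProd (piBoxProd fun i : Fin n => G i.succ) ≃g piBoxProd G where
  toEquiv := Fin.consEquiv V
  map_rel_iff' := by
    rintro ⟨a, x⟩ ⟨b, y⟩
    simp [piBoxProd, boxProd_adj, Fin.exists_fin_succ, Fin.forall_fin_succ, funext_iff,
      (Fin.succ_ne_zero _).symm, and_comm, and_left_comm]

abbrev hypercube (d : ℕ) : SimpleGraph (Fin d → Fin 2) :=
  piBoxProd fun _ : Fin d => (⊤ : SimpleGraph (Fin 2))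

def hypercubeSuccIso (d : ℕ) : prism (hypercube d) ≃g hypercube (d + 1) :=
  piBoxProdFinSuccIso (V := fun _ => Fin 2) fun _ => ⊤

instance (d : ℕ) : DecidableRel (hypercube d).Adj := fun x y =>
  inferInstanceAs
    (Decidable (∃ i, (⊤ : SimpleGraph (Fin 2)).Adj (x i) (y i) ∧ ∀ j, j ≠ i → x j = y j))

lemma hypercube_isRegularOfDegree (d : ℕ) : (hypercube d).IsRegularOfDegree d := by
  induction d with
  | zero => exact fun v => IsIsolated.degree_eq_zero _ _ fun w ⟨i, _⟩ => i.elim0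
  | succ d ih =>
    intro v
    obtain ⟨⟨t, x⟩, rfl⟩ := (hypercubeSuccIso d).surjective v
    rw [Iso.degree_eq, degree_boxProd, ih.degree_eq, IsRegularOfDegree.top.degree_eq]
    simp [add_comm]

lemma exists_isAcyclicEdgeColoring_hypercube {d : ℕ} (hd : 1 ≤ d) :
    ∃ c : Sym2 (Fin d → Fin 2) → Fin (d + 1), IsAcyclicEdgeColoring (hypercube d) c := by
  induction d, hd using Nat.le_induction with
  | base => exact ⟨fun _ => 0, isAcyclicEdgeColoring_of_card_le_two (by simp) _⟩
  | succ d hd ih =>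
    obtain ⟨c, hc⟩ := ih
    have hσ : ∀ a, finRotate (d + 1) a ≠ a := by
      obtain ⟨d, rfl⟩ := Nat.exists_eq_add_of_le' hd
      simp
    exact ⟨_, ((hc.prismColoring hσ).equiv_comp (finSuccEquiv (d + 1)).symm).comap
      (hypercubeSuccIso d).symm.toHom (hypercubeSuccIso d).symm.injective⟩

/-- The acyclic chromatic index of the `d`-dimensional hypercube `Q_d = K₂^d`
equals `d + 1` for all `d ≥ 2`, and equals `1` for `d = 1`. -/
theorem acyclicChromaticIndex_hypercube (d : ℕ) :
    (2 ≤ d →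
      acyclicChromaticIndex (piBoxProd (fun _ : Fin d => (⊤ : SimpleGraph (Fin 2)))) = d + 1) ∧
    (d = 1 →
      acyclicChromaticIndex (piBoxProd (fun _ : Fin d => (⊤ : SimpleGraph (Fin 2)))) = 1) := by
  refine ⟨fun hd => ?_, ?_⟩
  · refine acyclicChromaticIndex_eq (exists_isAcyclicEdgeColoring_hypercube (by omega))
      fun m c hc => ?_
    simpa using (hypercube_isRegularOfDegree d).lt_card_of_isAcyclicEdgeColoring hd hc
  · rintro rfl
    refine acyclicChromaticIndex_eq ⟨fun _ => 0, isAcyclicEdgeColoring_of_card_le_two (by simp) _⟩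
      fun m c _ => Nat.one_le_iff_ne_zero.mpr ?_
    rintro rfl
    exact (c s(0, 0)).elim0
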